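/- For h ∈ ℂ with Re(h) > -1/2 and integer k ≥ 2h+2 (more generally whenever the integral converges), ∫₀^∞ x^{2h}/(1−ix)^k dx = −iπ e^{iπh} (−2h)_{k−1} / ((k−1)! sin(2πh)), where (a)_j is the Pochhammer symbol. -/

import Mathlib

/-!
The substitution `x = t / (1 - t)` turns `∫₀^∞ x^(u-1) / (1 + x)^k dx` into Euler's Beta integral
`B(u, k - u) = Γ(u) Γ(k - u) / Γ(k)`, and scaling `x` gives the factor `r^(-u)` when `1 + x` is
replaced by `1 + r x`, `r > 0`. Both sides of `∫₀^∞ x^(u-1) / (1 + a x)^k dx = B(u, k - u) a^(-u)`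
are holomorphic in `a` on the half-plane `Im a < Re a` (there `|1 + a x| ≥ c (1 + x)` locally
uniformly in `a`, so one may differentiate under the integral sign), and this half-plane contains
`-i`. At `a = -i` and `u = 2h + 1` one has `(-i)^(-u) = i e^(iπh)`, and
`Γ(u) Γ(k - u) = (-2h)_(k-1) Γ(1 + 2h) Γ(-2h) = (-2h)_(k-1) π / sin(-2πh)`.
-/

open MeasureTheory Polynomial

open Set Filter Complex Topology
open scoped Real

lemma image_div_one_sub_Ioo : (fun t : ℝ => t / (1 - t)) '' Ioo 0 1 = Ioi 0 := by
  ext y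
  constructor
  · rintro ⟨t, ⟨ht0, ht1⟩, rfl⟩
    exact div_pos ht0 (sub_pos.2 ht1)
  · intro (hy : 0 < y)
    refine ⟨y / (1 + y), ⟨by positivity, (div_lt_one (by positivity)).2 (by linarith)⟩, ?_⟩
    field_simp
    ring

lemma hasDerivWithinAt_div_one_sub {t : ℝ} (ht : t ≠ 1) (s : Set ℝ) :
    HasDerivWithinAt (fun t : ℝ => t / (1 - t)) (((1 - t) ^ 2)⁻¹) s t := by
  have h1t : 1 - t ≠ 0 := sub_ne_zero.2 (Ne.symm ht)
  have hquot := (hasDerivAt_id' t).fun_div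
    ((hasDerivAt_const t (1 : ℝ)).fun_sub (hasDerivAt_id' t)) h1t
  exact hquot.hasDerivWithinAt.congr_deriv (by field_simp; ring)

lemma injOn_div_one_sub : InjOn (fun t : ℝ => t / (1 - t)) (Ioo 0 1) := by
  intro s ⟨_, hs⟩ t ⟨_, ht⟩ hst
  have h1 : 1 - s ≠ 0 := by linarith
  have h2 : 1 - t ≠ 0 := by linarith
  simp only at hst
  field_simp at hst
  linarith

lemma abs_smul_cpow_div_one_add_pow_div_one_sub (u : ℂ) (k : ℕ) {t : ℝ} (ht : t ∈ Ioo 0 1) :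
    |((1 - t) ^ 2)⁻¹| • (((t / (1 - t) : ℝ) : ℂ) ^ (u - 1) / (1 + ((t / (1 - t) : ℝ) : ℂ)) ^ k) =
      (t : ℂ) ^ (u - 1) * (1 - (t : ℂ)) ^ ((k - u) - 1) := by
  obtain ⟨ht0, ht1⟩ := ht
  have hpos : 0 < 1 - t := sub_pos.2 ht1
  have hne : (1 - (t : ℂ)) ≠ 0 := by exact_mod_cast hpos.ne'
  have harg : ((1 - t : ℝ) : ℂ).arg ≠ Real.pi := by
    rw [arg_ofReal_of_nonneg hpos.le]; exact Real.pi_pos.ne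
  have hsum : 1 + ((t / (1 - t) : ℝ) : ℂ) = (1 - (t : ℂ))⁻¹ := by
    push_cast; field_simp; ring
  rw [hsum, inv_pow, div_inv_eq_mul, abs_of_pos (by positivity), div_eq_mul_inv t, ofReal_mul,
    mul_cpow_ofReal_nonneg ht0.le (inv_nonneg.2 hpos.le), ofReal_inv, inv_cpow _ _ harg,
    show (k : ℂ) - u - 1 = k - (u - 1) - 2 by ring, cpow_sub _ _ hne, cpow_sub _ _ hne,
    cpow_natCast, cpow_ofNat, real_smul]
  push_cast
  field_simp

theorem integrableOn_cpow_div_one_add_pow {u : ℂ} {k : ℕ} (hu : 0 < u.re) (huk : u.re < k) :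
    IntegrableOn (fun x : ℝ => (x : ℂ) ^ (u - 1) / (1 + x) ^ k) (Ioi 0) := by
  rw [← image_div_one_sub_Ioo, integrableOn_image_iff_integrableOn_abs_deriv_smul
    measurableSet_Ioo (fun t ht => hasDerivWithinAt_div_one_sub ht.2.ne _) injOn_div_one_sub]
  refine (integrableOn_congr_fun (fun t ht => abs_smul_cpow_div_one_add_pow_div_one_sub u k ht)
    measurableSet_Ioo).2 ?_
  rw [← integrableOn_Ioc_iff_integrableOn_Ioo,
    ← intervalIntegrable_iff_integrableOn_Ioc_of_le zero_le_one]
  exact betaIntegral_convergent hu (by simpa using huk)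

theorem integral_cpow_div_one_add_pow {u : ℂ} {k : ℕ} (hu : 0 < u.re) (huk : u.re < k) :
    ∫ x in Ioi (0 : ℝ), (x : ℂ) ^ (u - 1) / (1 + x) ^ k = Gamma u * Gamma (k - u) / Gamma k := by
  rw [← image_div_one_sub_Ioo, integral_image_eq_integral_abs_deriv_smul measurableSet_Ioo
    (fun t ht => hasDerivWithinAt_div_one_sub ht.2.ne _) injOn_div_one_sub,
    setIntegral_congr_fun measurableSet_Ioo
      (fun t ht => abs_smul_cpow_div_one_add_pow_div_one_sub u k ht),
    ← integral_Ioc_eq_integral_Ioo, ← intervalIntegral.integral_of_le zero_le_one,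
    Gamma_mul_Gamma_eq_betaIntegral hu (by simpa using huk), add_sub_cancel,
    mul_div_cancel_left₀ _ (Gamma_ne_zero_of_re_pos (by simpa using hu.trans huk))]
  rfl

theorem integral_cpow_div_one_add_ofReal_mul_pow {u : ℂ} {k : ℕ} (hu : 0 < u.re) (huk : u.re < k)
    {r : ℝ} (hr : 0 < r) :
    ∫ x in Ioi (0 : ℝ), (x : ℂ) ^ (u - 1) / (1 + r * x) ^ k =
      Gamma u * Gamma (k - u) / Gamma k * (r : ℂ) ^ (-u) := by
  have hr' : (r : ℂ) ≠ 0 := ofReal_ne_zero.2 hr.ne'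
  have hscale := integral_comp_mul_left_Ioi (fun y : ℝ => (y : ℂ) ^ (u - 1) / (1 + y) ^ k) 0 hr
  rw [mul_zero, integral_cpow_div_one_add_pow hu huk] at hscale
  have hpt : ∀ x ∈ Ioi (0 : ℝ), ((r * x : ℝ) : ℂ) ^ (u - 1) / (1 + (r * x : ℝ)) ^ k =
      (r : ℂ) ^ (u - 1) * ((x : ℂ) ^ (u - 1) / (1 + r * x) ^ k) := fun x hx => by
    rw [ofReal_mul, mul_cpow_ofReal_nonneg hr.le (le_of_lt hx), mul_div_assoc]
  rw [setIntegral_congr_fun measurableSet_Ioi hpt, integral_const_mul, cpow_sub _ _ hr',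
    cpow_one, real_smul, ofReal_inv] at hscale
  field_simp at hscale
  rw [cpow_neg, eq_mul_inv_iff_mul_eq₀ (cpow_ne_zero_iff.2 (Or.inl hr')), mul_comm, hscale]

lemma le_two_mul_norm_one_add_mul_ofReal {a : ℂ} {δ : ℝ} (hδa : δ ≤ a.re - a.im) (hδ1 : δ ≤ 1)
    {x : ℝ} (hx : 0 ≤ x) : δ * (1 + x) ≤ 2 * ‖1 + a * x‖ := by
  have hre := abs_re_le_norm (1 + a * x)
  have him := abs_im_le_norm (1 + a * x)
  simp only [add_re, one_re, mul_re, ofReal_re, ofReal_im, mul_zero, sub_zero, add_im, one_im,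
    mul_im, zero_add] at hre him
  nlinarith [mul_le_mul_of_nonneg_right hδa hx, le_abs_self (1 + a.re * x),
    neg_abs_le (a.im * x)]

lemma one_add_mul_ofReal_ne_zero {a : ℂ} {δ : ℝ} (hδ : 0 < δ) (hδa : δ ≤ a.re - a.im)
    (hδ1 : δ ≤ 1) {x : ℝ} (hx : 0 ≤ x) : 1 + a * x ≠ 0 := by
  intro h
  have := le_two_mul_norm_one_add_mul_ofReal hδa hδ1 hx
  rw [h, norm_zero] at this
  nlinarith

lemma norm_cpow_div_one_add_mul_pow_le {a : ℂ} {δ : ℝ} (hδ : 0 < δ) (hδa : δ ≤ a.re - a.im)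
    (hδ1 : δ ≤ 1) (s : ℂ) (n : ℕ) {x : ℝ} (hx : 0 < x) :
    ‖(x : ℂ) ^ s / (1 + a * x) ^ n‖ ≤ (2 / δ) ^ n * ‖(x : ℂ) ^ s / (1 + x) ^ n‖ := by
  have hbound : δ / 2 * (1 + x) ≤ ‖1 + a * x‖ := by
    linarith [le_two_mul_norm_one_add_mul_ofReal hδa hδ1 hx.le]
  have h1x : ‖(1 : ℂ) + x‖ = 1 + x := by
    exact_mod_cast Real.norm_of_nonneg (by positivity : (0 : ℝ) ≤ 1 + x)
  have hpos : 0 < δ / 2 * (1 + x) := by positivity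
  rw [norm_div, norm_div, norm_pow, norm_pow, h1x]
  calc ‖(x : ℂ) ^ s‖ / ‖1 + a * x‖ ^ n ≤ ‖(x : ℂ) ^ s‖ / (δ / 2 * (1 + x)) ^ n := by gcongr
    _ = (2 / δ) ^ n * (‖(x : ℂ) ^ s‖ / (1 + x) ^ n) := by
      rw [mul_pow, div_pow, div_pow]; field_simp

lemma continuousOn_cpow_div_one_add_mul_pow (s : ℂ) (n : ℕ) {a : ℂ}
    (ha : ∀ x : ℝ, 0 < x → 1 + a * x ≠ 0) :
    ContinuousOn (fun x : ℝ => (x : ℂ) ^ s / (1 + a * x) ^ n) (Ioi 0) := fun x hx =>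
  ((continuousAt_ofReal_cpow_const x s (Or.inr (ne_of_gt hx))).div (by fun_prop)
    (pow_ne_zero n (ha x hx))).continuousWithinAt

lemma hasDerivAt_cpow_div_one_add_mul_pow (s : ℂ) (n : ℕ) {x : ℝ} (hx : 0 < x) {b : ℂ}
    (hb : 1 + b * x ≠ 0) :
    HasDerivAt (fun a : ℂ => (x : ℂ) ^ (s - 1) / (1 + a * x) ^ n)
      (-n * ((x : ℂ) ^ s / (1 + b * x) ^ (n + 1))) b := by
  have hx' : (x : ℂ) ≠ 0 := ofReal_ne_zero.2 hx.ne'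
  have hlin : HasDerivAt (fun a : ℂ => 1 + a * x) x b := by
    simpa using ((hasDerivAt_id b).mul_const (x : ℂ)).const_add 1
  have hzpow := ((hasDerivAt_zpow (-(n : ℤ)) _ (Or.inl hb)).comp b hlin).const_mul
    ((x : ℂ) ^ (s - 1))
  refine (hzpow.congr_deriv ?_).congr_of_eventuallyEq (Eventually.of_forall fun a => ?_)
  · rw [show -(n : ℤ) - 1 = -((n + 1 : ℕ) : ℤ) by push_cast; ring, zpow_neg, zpow_natCast,
      cpow_sub _ _ hx', cpow_one]
    push_cast
    field_simp
  · simp only [Function.comp_apply, zpow_neg, zpow_natCast, div_eq_mul_inv]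

lemma exists_forall_mem_ball_le_re_sub_im {a₀ : ℂ} (ha₀ : a₀.im < a₀.re) :
    ∃ ε > 0, ∃ δ > 0, δ ≤ 1 ∧ ∀ b ∈ Metric.ball a₀ ε, δ ≤ b.re - b.im := by
  refine ⟨(a₀.re - a₀.im) / 4, by linarith, min 1 ((a₀.re - a₀.im) / 2),
    lt_min one_pos (by linarith), min_le_left _ _, fun b hb => ?_⟩
  have hre := abs_re_le_norm (b - a₀)
  have him := abs_im_le_norm (b - a₀)
  rw [sub_re, abs_le] at hre
  rw [sub_im, abs_le] at him
  linarith [mem_ball_iff_norm.1 hb, min_le_right 1 ((a₀.re - a₀.im) / 2)]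

theorem differentiableOn_integral_cpow_div_one_add_mul_pow {u : ℂ} {k : ℕ} (hu : 0 < u.re)
    (huk : u.re < k) :
    DifferentiableOn ℂ (fun a : ℂ => ∫ x in Ioi (0 : ℝ), (x : ℂ) ^ (u - 1) / (1 + a * x) ^ k)
      {a | a.im < a.re} := by
  intro a₀ (ha₀ : a₀.im < a₀.re)
  obtain ⟨ε, hε, δ, hδ, hδ1, hδball⟩ := exists_forall_mem_ball_le_re_sub_im ha₀
  have hne : ∀ b ∈ Metric.ball a₀ ε, ∀ x : ℝ, 0 < x → 1 + b * x ≠ 0 := fun b hb x hx =>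
    one_add_mul_ofReal_ne_zero hδ (hδball b hb) hδ1 hx.le
  have ha₀ball : a₀ ∈ Metric.ball a₀ ε := Metric.mem_ball_self hε
  have hF_dom : Integrable (fun x : ℝ => ‖(x : ℂ) ^ (u - 1) / (1 + x) ^ k‖)
      (volume.restrict (Ioi 0)) := (integrableOn_cpow_div_one_add_pow hu huk).norm
  have hF'_dom : Integrable (fun x : ℝ => ‖(x : ℂ) ^ u / (1 + x) ^ (k + 1)‖)
      (volume.restrict (Ioi 0)) := by
    simpa using (integrableOn_cpow_div_one_add_pow (u := u + 1) (k := k + 1)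
      (by simp only [add_re, one_re]; linarith)
      (by simp only [add_re, one_re, Nat.cast_add, Nat.cast_one]; linarith)).norm
  refine (hasDerivAt_integral_of_dominated_loc_of_deriv_le (μ := volume.restrict (Ioi (0 : ℝ)))
    (F := fun (a : ℂ) (x : ℝ) => (x : ℂ) ^ (u - 1) / (1 + a * x) ^ k)
    (F' := fun (b : ℂ) (x : ℝ) => -k * ((x : ℂ) ^ u / (1 + b * x) ^ (k + 1)))
    (bound := fun x : ℝ => k * ((2 / δ) ^ (k + 1) * ‖(x : ℂ) ^ u / (1 + x) ^ (k + 1)‖))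
    (Metric.ball_mem_nhds a₀ hε) ?_ ?_ ?_ ?_ ?_ ?_).2.differentiableAt.differentiableWithinAt
  · filter_upwards [Metric.ball_mem_nhds a₀ hε] with b hb
    exact (continuousOn_cpow_div_one_add_mul_pow _ k (hne b hb)).aestronglyMeasurable
      measurableSet_Ioi
  · refine (hF_dom.const_mul ((2 / δ) ^ k)).mono'
      ((continuousOn_cpow_div_one_add_mul_pow _ k (hne a₀ ha₀ball)).aestronglyMeasurable
        measurableSet_Ioi) ?_
    filter_upwards [ae_restrict_mem measurableSet_Ioi] with x hx
    exact norm_cpow_div_one_add_mul_pow_le hδ (hδball a₀ ha₀ball) hδ1 _ k hx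
  · exact (continuousOn_const.mul (continuousOn_cpow_div_one_add_mul_pow _ (k + 1)
      (hne a₀ ha₀ball))).aestronglyMeasurable measurableSet_Ioi
  · filter_upwards [ae_restrict_mem measurableSet_Ioi] with x hx b hb
    rw [norm_mul, norm_neg, norm_natCast]
    gcongr
    exact norm_cpow_div_one_add_mul_pow_le hδ (hδball b hb) hδ1 _ (k + 1) hx
  · exact (hF'_dom.const_mul _).const_mul _
  · filter_upwards [ae_restrict_mem measurableSet_Ioi] with x hx b hb
    exact hasDerivAt_cpow_div_one_add_mul_pow u k hx (hne b hb x hx)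

lemma isPreconnected_setOf_im_lt_re : IsPreconnected {a : ℂ | a.im < a.re} := by
  have := convex_halfSpace_lt (imLm - reLm).isLinear (0 : ℝ)
  convert this.isPreconnected using 1
  ext a
  simp

theorem integral_cpow_div_one_add_mul_pow {u : ℂ} {k : ℕ} (hu : 0 < u.re) (huk : u.re < k)
    {a : ℂ} (ha : a.im < a.re) :
    ∫ x in Ioi (0 : ℝ), (x : ℂ) ^ (u - 1) / (1 + a * x) ^ k =
      Gamma u * Gamma (k - u) / Gamma k * a ^ (-u) := by
  have hopen : IsOpen {a : ℂ | a.im < a.re} := isOpen_lt continuous_im continuous_re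
  have hslit : ∀ a : ℂ, a.im < a.re → a ∈ slitPlane := fun a ha => by
    rw [mem_slitPlane_iff]
    by_contra! h
    linarith [h.1, h.2]
  have hlhs := (differentiableOn_integral_cpow_div_one_add_mul_pow hu huk).analyticOnNhd hopen
  have hrhs : AnalyticOnNhd ℂ (fun a : ℂ => Gamma u * Gamma (k - u) / Gamma k * a ^ (-u))
      {a | a.im < a.re} :=
    DifferentiableOn.analyticOnNhd (fun a ha =>
      ((differentiableAt_id.cpow_const (hslit a ha)).const_mul _).differentiableWithinAt) hopen
  refine hlhs.eqOn_of_preconnected_of_frequently_eq hrhs isPreconnected_setOf_im_lt_re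
    (z₀ := 1) (by simp) ?_ ha
  have hreal : Tendsto ((↑) : ℝ → ℂ) (𝓝[≠] 1) (𝓝[≠] 1) :=
    continuous_ofReal.continuousWithinAt.tendsto_nhdsWithin fun r hr => by
      simpa [ofReal_eq_one] using hr
  refine hreal.frequently (Eventually.frequently ?_)
  filter_upwards [eventually_nhdsWithin_of_eventually_nhds (eventually_gt_nhds one_pos)]
    with r hr
  exact integral_cpow_div_one_add_ofReal_mul_pow hu huk hr

lemma neg_I_cpow_neg (s : ℂ) : (-I) ^ (-s) = exp (π / 2 * I * s) := by
  rw [cpow_def_of_ne_zero (neg_ne_zero.2 I_ne_zero), log_neg_I]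
  ring_nf

lemma Gamma_one_sub_mul_Gamma_add_nat {z : ℂ} (hz : ∀ m : ℕ, z ≠ -m) (n : ℕ) :
    Gamma (1 - z) * Gamma (z + n) = (ascPochhammer ℂ n).eval z * (π / sin (π * z)) := by
  rw [← Gamma_add_nat_div_Gamma_eq z hz, ← Gamma_mul_Gamma_one_sub]
  field_simp [Gamma_ne_zero hz]

theorem stmt7_general (h : ℂ) (k : ℕ)
    (h1 : -(1/2) < h.re) (h2 : h.re < ((k : ℝ) - 1)/2)
    (h3 : ∀ n : ℤ, 2*h ≠ (n : ℂ)) :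
    ∫ x in Set.Ioi (0:ℝ), (x : ℂ) ^ (2*h) / (1 - Complex.I * x) ^ k =
      -Complex.I * Real.pi * Complex.exp (Complex.I * Real.pi * h) *
        (ascPochhammer ℂ (k-1)).eval (-2*h) /
        ((Nat.factorial (k-1) : ℂ) * Complex.sin (2 * Real.pi * h)) := by
  have hre : (1 - -2 * h).re = 2 * h.re + 1 := by simp; ring
  have hu : 0 < (1 - -2 * h).re := by rw [hre]; linarith
  have huk : (1 - -2 * h).re < k := by rw [hre]; linarith
  have hk : 1 ≤ k := Nat.cast_pos.1 (by linarith [hu.trans huk] : (0 : ℝ) < k)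
  have hz : ∀ m : ℕ, -2 * h ≠ -m := fun m hm => h3 m (by push_cast; linear_combination -hm)
  have hGamma_k : Gamma k = (k - 1).factorial := by
    rw [← Gamma_nat_eq_factorial, Nat.cast_sub hk, Nat.cast_one, sub_add_cancel]
  have hsub : (k : ℂ) - (1 - -2 * h) = -2 * h + (k - 1 : ℕ) := by
    rw [Nat.cast_sub hk, Nat.cast_one]; ring
  calc ∫ x in Ioi (0 : ℝ), (x : ℂ) ^ (2 * h) / (1 - I * x) ^ k
      = ∫ x in Ioi (0 : ℝ), (x : ℂ) ^ ((1 - -2 * h) - 1) / (1 + -I * x) ^ k := by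
        ring_nf
    _ = Gamma (1 - -2 * h) * Gamma (k - (1 - -2 * h)) / Gamma k * (-I) ^ (-(1 - -2 * h)) :=
        integral_cpow_div_one_add_mul_pow hu huk (by simp)
    _ = _ := by
      rw [hsub, Gamma_one_sub_mul_Gamma_add_nat hz, hGamma_k, neg_I_cpow_neg,
        show π / 2 * I * (1 - -2 * h) = I * π * h + π / 2 * I by ring, exp_add,
        exp_pi_div_two_mul_I,
        show (π : ℂ) * (-2 * h) = -(2 * π * h) by ring, sin_neg]
      ring

theorem stmt7 (h : ℂ) (k : ℕ) (hk : 1 ≤ k)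
    (h1 : -(1/2) < h.re) (h2 : h.re < ((k : ℝ) - 1)/2)
    (h3 : ∀ n : ℤ, 2*h ≠ (n : ℂ)) :
    ∫ x in Set.Ioi (0:ℝ), (x : ℂ) ^ (2*h) / (1 - Complex.I * x) ^ k =
      -Complex.I * Real.pi * Complex.exp (Complex.I * Real.pi * h) *
        (ascPochhammer ℂ (k-1)).eval (-2*h) /
        ((Nat.factorial (k-1) : ℂ) * Complex.sin (2 * Real.pi * h)) :=
  stmt7_general h k h1 h2 h3
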